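/- Let G be a finite simple graph with at least one vertex, let v ∈ V(G), let l ∈ ℕ, and let H ∈ IIM_l(G). Let S_c(v) consist of v together with every copy of v created at some step i (1 ≤ i ≤ l) that is a clone of v, and let S_a(v) consist of every copy of v created at some step i that is an anticlone of v. Then S_c(v) and S_a(v) each induce a complete subgraph of H, and |S_c(v)| + |S_a(v)| = l + 1; consequently ω(H) ≥ ⌈(l+1)/2⌉. -/

import Mathlib

/-- Vertex type after `l` IIM steps starting from vertex type `V`:
at each step every existing vertex gets one new copy. -/
def IterV (V : Type) : ℕ → Type
  | 0 => V
  | l + 1 => IterV V l ⊕ IterV V l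

instance iterVFintype {V : Type} [Fintype V] : ∀ l, Fintype (IterV V l)
  | 0 => inferInstanceAs (Fintype V)
  | l + 1 =>
    letI := iterVFintype (V := V) l
    inferInstanceAs (Fintype (IterV V l ⊕ IterV V l))

instance iterVNonempty {V : Type} [Nonempty V] : ∀ l, Nonempty (IterV V l)
  | 0 => inferInstanceAs (Nonempty V)
  | l + 1 =>
    letI := iterVNonempty (V := V) l
    inferInstanceAs (Nonempty (IterV V l ⊕ IterV V l))

/-- One IIM step: each vertex `v` of `G` gets a new copy (`Sum.inr v`), which is a
clone of `v` (joined to the closed neighborhood of `v`) if `σ v = true`, and an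
anticlone of `v` (joined to the complement of the closed neighborhood) if `σ v = false`.
Old vertices (`Sum.inl`) keep the edges of `G`; new vertices form an independent set. -/
def iimStep {V : Type} (G : SimpleGraph V) (σ : V → Bool) : SimpleGraph (V ⊕ V) where
  Adj x y :=
    match x, y with
    | Sum.inl u, Sum.inl v => G.Adj u v
    | Sum.inl u, Sum.inr v =>
        if σ v = true then u = v ∨ G.Adj u v else ¬(u = v ∨ G.Adj u v)
    | Sum.inr u, Sum.inl v =>
        if σ u = true then v = u ∨ G.Adj v u else ¬(v = u ∨ G.Adj v u)
    | Sum.inr _, Sum.inr _ => False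
  symm := by
    constructor
    rintro (u | u) (v | v) h
    · exact G.adj_symm h
    · exact h
    · exact h
    · exact h
  loopless := by
    constructor
    rintro (u | u) h
    · exact G.ne_of_adj h rfl
    · exact h

/-- The IIM graph after `l` steps starting from `G`, where `σ i` records, for each
vertex existing after `i` steps, whether its copy created at step `i+1` is a clone
(`true`) or an anticlone (`false`).  `IIM_l(G)` is exactly the set of graphs of the
form `iimGraph G σ l` as `σ` varies. -/
def iimGraph {V : Type} (G : SimpleGraph V) (σ : ∀ i, IterV V i → Bool) :
    ∀ l, SimpleGraph (IterV V l)
  | 0 => G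
  | l + 1 => iimStep (iimGraph G σ l) (σ l)

/-- The level (creation step) of a vertex of an IIM graph. -/
def levelOf {V : Type} : ∀ l, IterV V l → ℕ
  | 0, _ => 0
  | l + 1, Sum.inl x => levelOf l x
  | l + 1, Sum.inr _ => l + 1

/-- The (level-0) vertex `x` of the initial graph, viewed as a vertex of the IIM graph
after `l` steps. -/
def liftV {V : Type} (x : V) : ∀ l, IterV V l
  | 0 => x
  | l + 1 => Sum.inl (liftV x l)

/-- `S_c(x)`: the set consisting of `x` together with every copy of `x` (created at
some step `1 ≤ i ≤ l`) that is a clone of `x`, inside the IIM graph after `l` steps. -/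
def cloneSet {V : Type} (σ : ∀ i, IterV V i → Bool) (x : V) :
    ∀ l, Set (IterV V l)
  | 0 => {x}
  | l + 1 =>
      Sum.inl '' cloneSet σ x l ∪
        (if σ l (liftV x l) = true then {Sum.inr (liftV x l)} else ∅)

/-- `S_a(x)`: the set of all copies of `x` (created at some step `1 ≤ i ≤ l`) that are
anticlones of `x`, inside the IIM graph after `l` steps. -/
def anticloneSet {V : Type} (σ : ∀ i, IterV V i → Bool) (x : V) :
    ∀ l, Set (IterV V l)
  | 0 => ∅
  | l + 1 =>
      Sum.inl '' anticloneSet σ x l ∪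
        (if σ l (liftV x l) = false then {Sum.inr (liftV x l)} else ∅)

/-!
Write `x` for the vertex `v` inside the current graph. A new clone of `x` is joined to
`N[x]`, which contains `S_c(v)` since `x ∈ S_c(v)` and `S_c(v)` is a clique; a new anticlone
is joined to the complement of `N[x]`, which contains `S_a(v)`. So both sets stay cliques,
and `S_a(v)` stays outside `N[x]` because the new anticlone is not adjacent to `x`. Each
step puts the new copy of `x` into exactly one of the two sets, so their sizes sum to
`l + 1` and the larger one has at least `⌈(l + 1) / 2⌉` elements.
-/

namespace SimpleGraph

lemma IsClique.ncard_le_cliqueNum {α : Type*} [Finite α] {G : SimpleGraph α} {s : Set α}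
    (h : G.IsClique s) : s.ncard ≤ G.cliqueNum := by
  lift s to Finset α using s.toFinite
  rw [Set.ncard_coe_finset]
  exact IsClique.card_le_cliqueNum (tc := h)

end SimpleGraph

open SimpleGraph

section IIMStep

variable {W : Type} {G : SimpleGraph W} {τ : W → Bool}

lemma iimStep_adj_inl_inl {u w : W} : (iimStep G τ).Adj (Sum.inl u) (Sum.inl w) ↔ G.Adj u w :=
  Iff.rfl

lemma iimStep_adj_inl_inr_of_clone {u w : W} (hw : τ w = true) :
    (iimStep G τ).Adj (Sum.inl u) (Sum.inr w) ↔ u = w ∨ G.Adj u w := by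
  simp [iimStep, hw]

lemma iimStep_adj_inl_inr_of_anticlone {u w : W} (hw : τ w = false) :
    (iimStep G τ).Adj (Sum.inl u) (Sum.inr w) ↔ Gᶜ.Adj u w := by
  simp [iimStep, hw, compl_adj]

lemma iimStep_compl_adj_inl_inl {u w : W} :
    (iimStep G τ)ᶜ.Adj (Sum.inl u) (Sum.inl w) ↔ Gᶜ.Adj u w := by
  simp [compl_adj, iimStep_adj_inl_inl]

lemma iimStep_isClique_image_inl {S : Set W} (hS : G.IsClique S) :
    (iimStep G τ).IsClique (Sum.inl '' S) := by
  rintro _ ⟨a, ha, rfl⟩ _ ⟨b, hb, rfl⟩ hab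
  exact hS ha hb (ne_of_apply_ne _ hab)

lemma iimStep_isClique_insert_clone {S : Set W} {x : W} (hS : G.IsClique S) (hx : x ∈ S)
    (hτ : τ x = true) : (iimStep G τ).IsClique (insert (Sum.inr x) (Sum.inl '' S)) := by
  refine isClique_insert.2 ⟨iimStep_isClique_image_inl hS, ?_⟩
  rintro _ ⟨y, hy, rfl⟩ -
  refine ((iimStep_adj_inl_inr_of_clone hτ).2 ?_).symm
  by_cases hyx : y = x
  · exact Or.inl hyx
  · exact Or.inr (hS hy hx hyx)

lemma iimStep_isClique_insert_anticlone {S : Set W} {x : W} (hS : G.IsClique S)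
    (hSx : ∀ y ∈ S, Gᶜ.Adj y x) (hτ : τ x = false) :
    (iimStep G τ).IsClique (insert (Sum.inr x) (Sum.inl '' S)) := by
  refine isClique_insert.2 ⟨iimStep_isClique_image_inl hS, ?_⟩
  rintro _ ⟨y, hy, rfl⟩ -
  exact ((iimStep_adj_inl_inr_of_anticlone hτ).2 (hSx y hy)).symm

lemma ncard_insert_inr_image_inl [Finite W] (S : Set W) (w : W) :
    (insert (Sum.inr w) (Sum.inl '' S) : Set (W ⊕ W)).ncard = S.ncard + 1 := by
  rw [Set.ncard_insert_of_notMem (by simp), Set.ncard_image_of_injective _ Sum.inl_injective]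

end IIMStep

section IIMGraph

variable {V : Type} (σ : ∀ i, IterV V i → Bool) (x : V)

lemma cloneSet_succ (l : ℕ) :
    (cloneSet σ x (l + 1) : Set (IterV V l ⊕ IterV V l)) =
      if σ l (liftV x l) = true then insert (Sum.inr (liftV x l)) (Sum.inl '' cloneSet σ x l)
      else Sum.inl '' cloneSet σ x l := by
  rw [cloneSet]
  cases σ l (liftV x l)
  · exact Set.union_empty _
  · exact Set.union_singleton

lemma anticloneSet_succ (l : ℕ) :
    (anticloneSet σ x (l + 1) : Set (IterV V l ⊕ IterV V l)) =
      if σ l (liftV x l) = true then Sum.inl '' anticloneSet σ x l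
      else insert (Sum.inr (liftV x l)) (Sum.inl '' anticloneSet σ x l) := by
  rw [anticloneSet]
  cases σ l (liftV x l)
  · exact Set.union_singleton
  · exact Set.union_empty _

lemma liftV_mem_cloneSet : ∀ l, liftV x l ∈ cloneSet σ x l
  | 0 => rfl
  | l + 1 => Or.inl ⟨liftV x l, liftV_mem_cloneSet l, rfl⟩

variable (G : SimpleGraph V)

lemma isClique_cloneSet : ∀ l, (iimGraph G σ l).IsClique (cloneSet σ x l)
  | 0 => Set.pairwise_singleton _ _
  | l + 1 => by
    rw [cloneSet_succ]
    split_ifs with hσ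
    · exact iimStep_isClique_insert_clone (isClique_cloneSet l) (liftV_mem_cloneSet σ x l) hσ
    · exact iimStep_isClique_image_inl (isClique_cloneSet l)

-- `Hᶜ.Adj y x` says that `y` lies outside the closed neighbourhood of `x` in `H`.
lemma isClique_anticloneSet_and_compl_adj : ∀ l,
    (iimGraph G σ l).IsClique (anticloneSet σ x l) ∧
      ∀ y ∈ anticloneSet σ x l, (iimGraph G σ l)ᶜ.Adj y (liftV x l)
  | 0 => ⟨Set.pairwise_empty _, fun _ hy => hy.elim⟩
  | l + 1 => by
    obtain ⟨hS, hSx⟩ := isClique_anticloneSet_and_compl_adj l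
    rw [anticloneSet_succ]
    split_ifs with hσ
    · refine ⟨iimStep_isClique_image_inl hS, ?_⟩
      rintro _ ⟨y, hy, rfl⟩
      exact iimStep_compl_adj_inl_inl.2 (hSx y hy)
    · rw [Bool.not_eq_true] at hσ
      refine ⟨iimStep_isClique_insert_anticlone hS hSx hσ, ?_⟩
      rintro _ (rfl | ⟨y, hy, rfl⟩)
      · refine (compl_adj _ _ _).2 ⟨Sum.inr_ne_inl, fun h => ?_⟩
        exact (iimStep_adj_inl_inr_of_anticlone hσ).1 h.symm |>.1 rfl
      · exact iimStep_compl_adj_inl_inl.2 (hSx y hy)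

lemma ncard_cloneSet_add_ncard_anticloneSet [Fintype V] :
    ∀ l, (cloneSet σ x l).ncard + (anticloneSet σ x l).ncard = l + 1
  | 0 => by
    show ({x} : Set V).ncard + (∅ : Set V).ncard = 0 + 1
    simp
  | l + 1 => by
    have ih := ncard_cloneSet_add_ncard_anticloneSet l
    show Set.ncard (α := IterV V l ⊕ IterV V l) (cloneSet σ x (l + 1)) +
      Set.ncard (α := IterV V l ⊕ IterV V l) (anticloneSet σ x (l + 1)) = l + 1 + 1
    rw [cloneSet_succ, anticloneSet_succ]
    split_ifs <;>
      simp only [ncard_insert_inr_image_inl, Set.ncard_image_of_injective _ Sum.inl_injective] <;>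
      omega

end IIMGraph

theorem stmt14_general {V : Type} [Fintype V] (G : SimpleGraph V) (v : V)
    (l : ℕ) (σ : ∀ i, IterV V i → Bool) :
    (iimGraph G σ l).IsClique (cloneSet σ v l) ∧
    (iimGraph G σ l).IsClique (anticloneSet σ v l) ∧
    (cloneSet σ v l).ncard + (anticloneSet σ v l).ncard = l + 1 ∧
    (l + 1 + 1) / 2 ≤ (iimGraph G σ l).cliqueNum := by
  have hc := isClique_cloneSet σ v G l
  have ha := (isClique_anticloneSet_and_compl_adj σ v G l).1
  have hcard := ncard_cloneSet_add_ncard_anticloneSet σ v l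
  refine ⟨hc, ha, hcard, ?_⟩
  rcases le_total (anticloneSet σ v l).ncard (cloneSet σ v l).ncard with h | h
  · exact le_trans (by omega) hc.ncard_le_cliqueNum
  · exact le_trans (by omega) ha.ncard_le_cliqueNum

/-- For `H ∈ IIM_l(G)` and `v ∈ V(G)`, the sets `S_c(v)` and
`S_a(v)` each induce a complete subgraph of `H`, `|S_c(v)| + |S_a(v)| = l + 1`, and
consequently `ω(H) ≥ ⌈(l+1)/2⌉` (in `ℕ`, `⌈(l+1)/2⌉ = (l+2)/2`). -/
theorem stmt14 {V : Type} [Fintype V] [Nonempty V] (G : SimpleGraph V) (v : V)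
    (l : ℕ) (σ : ∀ i, IterV V i → Bool) :
    (iimGraph G σ l).IsClique (cloneSet σ v l) ∧
    (iimGraph G σ l).IsClique (anticloneSet σ v l) ∧
    (cloneSet σ v l).ncard + (anticloneSet σ v l).ncard = l + 1 ∧
    (l + 1 + 1) / 2 ≤ (iimGraph G σ l).cliqueNum :=
  stmt14_general G v l σ
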